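/- The size multipartite Ramsey number m_4(4K_2, C_7) equals 3. That is, every 2-coloring of the edges of K_{4×3} contains a matching 4K_2 in the first color or a cycle C_7 in the second color, and there is a 2-coloring of the edges of K_{4×2} containing neither. -/

import Mathlib

open SimpleGraph

/-- The complete multipartite graph `K_{j x t}` with `j` parts, each of size `t`. -/
def multiK (j t : ℕ) : SimpleGraph (Fin j × Fin t) where
  Adj a b := a.1 ≠ b.1
  symm := ⟨fun _ _ h => Ne.symm h⟩
  loopless := ⟨fun _ h => h rfl⟩

/-- `G` contains a copy of `H`. -/
def Contains {α β : Type*} (G : SimpleGraph α) (H : SimpleGraph β) : Prop :=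
  ∃ f : β → α, Function.Injective f ∧ ∀ ⦃a b⦄, H.Adj a b → G.Adj (f a) (f b)

/-- The monochromatic subgraph of `G` in color `i` under the edge-coloring `c`. -/
def colorClass {α : Type*} {k : ℕ} (G : SimpleGraph α) (c : Sym2 α → Fin k) (i : Fin k) :
    SimpleGraph α where
  Adj a b := G.Adj a b ∧ c s(a, b) = i
  symm := ⟨fun _ _ h => ⟨h.1.symm, by rw [Sym2.eq_swap]; exact h.2⟩⟩
  loopless := ⟨fun a h => G.irrefl h.1⟩

/-- The stripe `nK₂`: the graph consisting of `n` pairwise disjoint edges. -/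
def stripe (n : ℕ) : SimpleGraph (Fin n × Fin 2) where
  Adj a b := a.1 = b.1 ∧ a.2 ≠ b.2
  symm := ⟨fun _ _ h => ⟨h.1.symm, h.2.symm⟩⟩
  loopless := ⟨fun _ h => h.2 rfl⟩

/-- Every 3-coloring of the edges of `K_{j x t}` yields a copy of `K_{1,2}` in color 0,
or of `P₄` in color 1, or of `nK₂` in color 2. -/
def Arrows3 (j t n : ℕ) : Prop :=
  ∀ c : Sym2 (Fin j × Fin t) → Fin 3,
    Contains (colorClass (multiK j t) c 0) (pathGraph 3) ∨
    Contains (colorClass (multiK j t) c 1) (pathGraph 4) ∨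
    Contains (colorClass (multiK j t) c 2) (stripe n)

/-- Every 2-coloring of the edges of `K_{j x t}` yields a copy of `nK₂` in color 0
or of `C₇` in color 1. -/
def ArrowsC7 (j t n : ℕ) : Prop :=
  ∀ c : Sym2 (Fin j × Fin t) → Fin 2,
    Contains (colorClass (multiK j t) c 0) (stripe n) ∨
    Contains (colorClass (multiK j t) c 1) (cycleGraph 7)

/-!
Call colour `0` red and colour `1` blue. With no red `4K₂`, a maximum red matching `M` has
`|M| ≤ 3`, so at least six vertices are unmatched, and by maximality every cross edge between
unmatched vertices is blue. If `|M| ≤ 2` there are seven unmatched vertices, inducing a blue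
complete multipartite graph. If `|M| = 3`, pick an edge `ab ∈ M`: since `M` cannot be
augmented, one of `a`, `b` is joined in blue to all six unmatched vertices outside its part,
except for at most one vertex `w`.

In both cases seven vertices of `K_{m×3}` span all cross edges in blue except possibly one edge
`yw`. List the seven vertices by a key `3 · (rank of the part) + (rank inside the part)` in which
`y` comes last in the first part and `w` first in the second. Entries three or more places apart
lie in different parts and are not `{y, w}`, so `x₀ x₃ x₆ x₂ x₅ x₁ x₄` is a blue `C₇`.

For `K_{4×2}`, colour red exactly the edges meeting the first part: the red graph is covered by two
vertices, so it has no `4K₂`, and the blue graph lives on the remaining six vertices.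
-/

lemma contains_cycleGraph_seven_of_adj_add_three {α : Type*} {G : SimpleGraph α} (x : Fin 7 → α)
    (hx : Function.Injective x) (hadj : ∀ i, G.Adj (x i) (x (i + 3))) :
    Contains G (cycleGraph 7) := by
  have hmul : Function.Injective fun i : Fin 7 => 3 * i := by decide
  have hstep : ∀ a b : Fin 7, (cycleGraph 7).Adj a b → 3 * a = 3 * b + 3 ∨ 3 * b = 3 * a + 3 := by
    decide
  refine ⟨fun i => x (3 * i), hx.comp hmul, fun a b hab => ?_⟩
  rcases hstep a b hab with h | h
  · simpa only [h] using (hadj (3 * b)).symm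
  · simpa only [h] using hadj (3 * a)

lemma contains_cycleGraph_seven_of_key {α : Type*} {G : SimpleGraph α} (T : Finset α)
    (hT : T.card = 7) (key : α → ℕ) (hkey : Set.InjOn key T)
    (hadj : ∀ u ∈ T, ∀ v ∈ T, key u + 3 ≤ key v → G.Adj u v) :
    Contains G (cycleGraph 7) := by
  classical
  set e := (T.image key).orderEmbOfFin (by rw [Finset.card_image_of_injOn hkey, hT])
  choose x hxT hxkey using fun i => Finset.mem_image.mp ((T.image key).orderEmbOfFin_mem _ i)
  have hgap : ∀ i : Fin 7, e i + 3 ≤ e (i + 3) ∨ e (i + 3) + 3 ≤ e i := by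
    have h := e.strictMono
    have h01 := h (show (0 : Fin 7) < 1 by decide)
    have h12 := h (show (1 : Fin 7) < 2 by decide)
    have h23 := h (show (2 : Fin 7) < 3 by decide)
    have h34 := h (show (3 : Fin 7) < 4 by decide)
    have h45 := h (show (4 : Fin 7) < 5 by decide)
    have h56 := h (show (5 : Fin 7) < 6 by decide)
    intro i
    fin_cases i <;>
      simp only [Fin.zero_eta, Fin.mk_one, Fin.reduceFinMk, Fin.isValue, zero_add,
        Fin.reduceAdd] <;>
      omega
  refine contains_cycleGraph_seven_of_adj_add_three x
    (fun i j hij => e.injective (by rw [← hxkey i, ← hxkey j, hij])) fun i => ?_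
  rcases hgap i with h | h
  · exact hadj _ (hxT i) _ (hxT _) (by rwa [hxkey, hxkey])
  · exact (hadj _ (hxT _) _ (hxT i) (by rwa [hxkey, hxkey])).symm

lemma exists_blockKey {m : ℕ} (y w : Fin m × Fin 3) (hyw : y.1 ≠ w.1) :
    ∃ key : Fin m × Fin 3 → ℕ, Function.Injective key ∧
      (∀ u v : Fin m × Fin 3, u.1 = v.1 → key u < key v + 3) ∧ key y = 2 ∧ key w = 3 := by
  obtain ⟨m, rfl⟩ : ∃ m', m = m' + 2 :=
    ⟨m - 2, by have := Fin.val_ne_of_ne hyw; have := y.1.isLt; have := w.1.isLt; omega⟩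
  set σ : Equiv.Perm (Fin (m + 2)) := Equiv.swap (Equiv.swap y.1 0 w.1) 1 * Equiv.swap y.1 0
  set τ : Fin (m + 2) → Equiv.Perm (Fin 3) :=
    fun p => if p = y.1 then Equiv.swap y.2 2 else Equiv.swap w.2 0
  have hσy : σ y.1 = 0 := by
    have : Equiv.swap y.1 0 w.1 ≠ 0 := by simpa [Equiv.swap_apply_eq_iff] using hyw.symm
    simp [σ, Equiv.swap_apply_of_ne_of_ne this.symm]
  have hσw : σ w.1 = 1 := by simp [σ]
  refine ⟨fun v => finProdFinEquiv (Equiv.prodShear σ τ v),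
    Fin.val_injective.comp (finProdFinEquiv.injective.comp (Equiv.injective _)), ?_, ?_, ?_⟩
  · intro u v huv
    simp only [finProdFinEquiv_apply_val, Equiv.prodShear_apply, huv]
    omega
  · simp [finProdFinEquiv_apply_val, hσy, τ]
  · simp [finProdFinEquiv_apply_val, hσw, τ, Ne.symm hyw]

lemma contains_cycleGraph_seven_of_cross_adj_except {m : ℕ} {G : SimpleGraph (Fin m × Fin 3)}
    (T : Finset (Fin m × Fin 3)) (hT : T.card = 7) (y w : Fin m × Fin 3)
    (hadj : ∀ u ∈ T, ∀ v ∈ T, u.1 ≠ v.1 → s(u, v) ≠ s(y, w) → G.Adj u v) :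
    Contains G (cycleGraph 7) := by
  wlog hyw : y.1 ≠ w.1 generalizing w with H
  · have : Nontrivial (Fin m) := by
      rw [Fin.nontrivial_iff_two_le]
      have := T.card_le_univ
      simp only [hT, Fintype.card_prod, Fintype.card_fin] at this
      omega
    obtain ⟨p, hp⟩ := exists_ne y.1
    refine H (p, 0) (fun u hu v hv huv _ => hadj u hu v hv huv fun h => huv ?_) hp.symm
    rcases Sym2.eq_iff.mp h with ⟨rfl, rfl⟩ | ⟨rfl, rfl⟩ <;> grind
  obtain ⟨key, hkey, hpart, hy, hw⟩ := exists_blockKey y w hyw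
  refine contains_cycleGraph_seven_of_key T hT key hkey.injOn fun u hu v hv huv => ?_
  refine hadj u hu v hv (fun h => ?_) fun h => ?_
  · have := hpart v u h.symm
    omega
  · rcases Sym2.eq_iff.mp h with ⟨rfl, rfl⟩ | ⟨rfl, rfl⟩ <;> omega

section Stripe
variable {α : Type*} {G : SimpleGraph α} {k : ℕ}

lemma contains_stripe_iff : Contains G (stripe k) ↔
    ∃ f : Fin k × Fin 2 → α, Function.Injective f ∧ ∀ i, G.Adj (f (i, 0)) (f (i, 1)) := by
  refine ⟨fun ⟨f, hf, hadj⟩ => ⟨f, hf, fun i => hadj ⟨rfl, zero_ne_one⟩⟩, fun ⟨f, hf, hadj⟩ => ?_⟩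
  refine ⟨f, hf, fun ⟨i, a⟩ ⟨i', b⟩ ⟨hi, hab⟩ => ?_⟩
  obtain rfl : i = i' := hi
  fin_cases a <;> fin_cases b
  · exact absurd rfl hab
  · exact hadj i
  · exact (hadj i).symm
  · exact absurd rfl hab

lemma contains_stripe_succ {f : Fin k × Fin 2 → α} (hf : Function.Injective f)
    (hadj : ∀ i, G.Adj (f (i, 0)) (f (i, 1))) {u v : α} (hu : u ∉ Set.range f)
    (hv : v ∉ Set.range f) (huv : G.Adj u v) : Contains G (stripe (k + 1)) := by
  let g : Fin (k + 1) × Fin 2 → α := fun p => Fin.cases (![u, v] p.2) (fun i => f (i, p.2)) p.1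
  refine contains_stripe_iff.2 ⟨g, ?_, fun i => ?_⟩
  · have hnew : ∀ a, ![u, v] a ∉ Set.range f := by
      intro a; fin_cases a <;> assumption
    rintro ⟨i, a⟩ ⟨i', b⟩ h
    induction i using Fin.cases <;> induction i' using Fin.cases <;>
      simp only [g, Fin.cases_zero, Fin.cases_succ] at h
    · fin_cases a <;> fin_cases b <;> simp_all [huv.ne, huv.ne.symm]
    · exact (hnew a ⟨_, h.symm⟩).elim
    · exact (hnew b ⟨_, h⟩).elim
    · cases hf h; rfl
  · induction i using Fin.cases
    · exact huv
    · exact hadj _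

lemma contains_stripe_succ_of_augment {f : Fin k × Fin 2 → α} (hf : Function.Injective f)
    (hadj : ∀ i, G.Adj (f (i, 0)) (f (i, 1))) (i : Fin k) {u v : α} (hu : u ∉ Set.range f)
    (hv : v ∉ Set.range f) (huv : u ≠ v) (hau : G.Adj (f (i, 0)) u) (hbv : G.Adj (f (i, 1)) v) :
    Contains G (stripe (k + 1)) := by
  classical
  set f' := Function.update f (i, 1) u
  refine contains_stripe_succ (f := f') (fun p q h => ?_) (fun j => ?_) (u := f (i, 1)) ?_ ?_ hbv
  · simp only [f', Function.update_apply] at h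
    split_ifs at h with hp hq hq
    · rw [hp, hq]
    · exact (hu ⟨q, h.symm⟩).elim
    · exact (hu ⟨p, h⟩).elim
    · exact hf h
  · by_cases hj : j = i
    · subst hj; simpa [f'] using hau
    · simpa [f', hj] using hadj j
  · rintro ⟨p, hp⟩
    simp only [f', Function.update_apply] at hp
    split_ifs at hp with h
    · exact hu ⟨_, hp.symm⟩
    · exact h (hf hp)
  · rintro ⟨p, hp⟩
    simp only [f', Function.update_apply] at hp
    split_ifs at hp
    · exact huv hp
    · exact hv ⟨p, hp⟩

lemma exists_maximal_stripe {m : ℕ} (h : ¬ Contains G (stripe (m + 1))) :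
    ∃ k ≤ m, Contains G (stripe k) ∧ ¬ Contains G (stripe (k + 1)) := by
  classical
  have h0 : Contains G (stripe 0) :=
    contains_stripe_iff.2 ⟨fun p => p.1.elim0, fun p => p.1.elim0, fun i => i.elim0⟩
  set P : ℕ → Prop := fun k => Contains G (stripe k)
  refine ⟨Nat.findGreatest P m, Nat.findGreatest_le m,
    Nat.findGreatest_spec (P := P) (Nat.zero_le m) h0, fun h' => ?_⟩
  rcases (Nat.findGreatest_le (P := P) m).lt_or_eq with hlt | heq
  · exact Nat.findGreatest_is_greatest (Nat.lt_succ_self _) hlt h'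
  · exact h (heq ▸ h')
end Stripe

lemma contains_cycleGraph_seven_of_cross_adj_insert {m : ℕ} {G : SimpleGraph (Fin m × Fin 3)}
    (S : Finset (Fin m × Fin 3)) (hS : S.card = 6) {y : Fin m × Fin 3} (hy : y ∉ S)
    (w : Fin m × Fin 3) (hSS : ∀ u ∈ S, ∀ v ∈ S, u.1 ≠ v.1 → G.Adj u v)
    (hyS : ∀ u ∈ S, y.1 ≠ u.1 → u ≠ w → G.Adj y u) : Contains G (cycleGraph 7) := by
  refine contains_cycleGraph_seven_of_cross_adj_except (insert y S)
    (by rw [Finset.card_insert_of_notMem hy, hS]) y w fun u hu v hv huv hyw => ?_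
  rcases Finset.mem_insert.1 hu with rfl | huS <;> rcases Finset.mem_insert.1 hv with rfl | hvS
  · exact absurd rfl huv
  · exact hyS v hvS huv fun h => hyw (h ▸ rfl)
  · exact (hyS u huS huv.symm fun h => hyw (h ▸ Sym2.eq_swap)).symm
  · exact hSS u huS v hvS huv

lemma colorClass_one_adj_of_not_zero {α : Type*} {G : SimpleGraph α} {c : Sym2 α → Fin 2} {u v : α}
    (h : G.Adj u v) (h0 : ¬ (colorClass G c 0).Adj u v) : (colorClass G c 1).Adj u v :=
  ⟨h, Fin.eq_one_of_ne_zero _ fun h' => h0 ⟨h, h'⟩⟩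

lemma arrowsC7_four_three_four : ArrowsC7 4 3 4 := by
  classical
  intro c
  set R := colorClass (multiK 4 3) c 0
  set B := colorClass (multiK 4 3) c 1
  refine or_iff_not_imp_left.2 fun hR => ?_
  obtain ⟨k, hk, hRk, hmax⟩ := exists_maximal_stripe (m := 3) hR
  obtain ⟨f, hf, hfadj⟩ := contains_stripe_iff.1 hRk
  set U := (Finset.univ.image f)ᶜ
  have hU : ∀ u, u ∈ U ↔ u ∉ Set.range f := by simp [U]
  have hUcard : U.card + 2 * k = 12 := by
    rw [Finset.card_compl, Finset.card_image_of_injective _ hf]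
    simp only [Finset.card_univ, Fintype.card_prod, Fintype.card_fin]
    omega
  have hUB : ∀ u ∈ U, ∀ v ∈ U, u.1 ≠ v.1 → B.Adj u v := fun u hu v hv huv =>
    colorClass_one_adj_of_not_zero huv fun h =>
      hmax (contains_stripe_succ hf hfadj ((hU u).1 hu) ((hU v).1 hv) h)
  rcases hk.lt_or_eq with hk | rfl
  · obtain ⟨T, hTU, hT⟩ := Finset.exists_subset_card_eq (show 7 ≤ U.card by omega)
    exact contains_cycleGraph_seven_of_cross_adj_except T hT 0 0
      fun u hu v hv huv _ => hUB u (hTU hu) v (hTU hv) huv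
  · have hnotU : ∀ j, f (0, j) ∉ U := fun j h => (hU _).1 h ⟨_, rfl⟩
    have haug : ∀ u ∈ U, ∀ v ∈ U, u ≠ v → R.Adj (f (0, 0)) u → R.Adj (f (0, 1)) v → False :=
      fun u hu v hv huv hau hbv => hmax <|
        contains_stripe_succ_of_augment hf hfadj 0 ((hU u).1 hu) ((hU v).1 hv) huv hau hbv
    have hcore : ∀ y ∉ U, ∀ w, (∀ u ∈ U, y.1 ≠ u.1 → u ≠ w → ¬ R.Adj y u) →
        Contains B (cycleGraph 7) := fun y hy w hyU =>
      contains_cycleGraph_seven_of_cross_adj_insert U (by omega) hy w hUB fun u hu hyu huw =>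
        colorClass_one_adj_of_not_zero hyu (hyU u hu hyu huw)
    by_cases hv0 : ∃ v₀ ∈ U, R.Adj (f (0, 1)) v₀
    · obtain ⟨v₀, hv₀U, hbv₀⟩ := hv0
      exact hcore _ (hnotU 0) v₀ fun u hu _ huv₀ hau => haug u hu v₀ hv₀U huv₀ hau hbv₀
    · push Not at hv0
      exact hcore _ (hnotU 1) 0 fun u hu _ _ => hv0 u hu

lemma Contains.card_le {α β : Type*} [Fintype α] [Fintype β] {G : SimpleGraph α}
    {H : SimpleGraph β} (h : Contains G H) : Fintype.card β ≤ Fintype.card α :=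
  Fintype.card_le_of_injective _ h.choose_spec.1

lemma Contains.card_le_card_of_adj_mem {α β : Type*} [Fintype β] {G : SimpleGraph α}
    {H : SimpleGraph β} (h : Contains G H) (C : Finset α) (hC : ∀ u v, G.Adj u v → u ∈ C)
    (hH : ∀ b, ∃ b', H.Adj b b') : Fintype.card β ≤ C.card := by
  obtain ⟨f, hf, hadj⟩ := h
  refine Finset.card_le_card_of_injOn f (fun b _ => ?_) hf.injOn
  obtain ⟨b', hb⟩ := hH b
  exact hC _ _ (hadj hb)

lemma Contains.stripe_le_card_of_cover {α : Type*} {G : SimpleGraph α} {n : ℕ}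
    (h : Contains G (stripe n)) (C : Finset α) (hC : ∀ u v, G.Adj u v → u ∈ C ∨ v ∈ C) :
    n ≤ C.card := by
  classical
  obtain ⟨f, hf, hadj⟩ := contains_stripe_iff.1 h
  have hcover : ∀ i, ∃ a, f (i, a) ∈ C := fun i =>
    (hC _ _ (hadj i)).elim (fun h => ⟨0, h⟩) fun h => ⟨1, h⟩
  choose a ha using hcover
  simpa using Finset.card_le_card_of_injOn (s := Finset.univ) (fun i => f (i, a i))
    (fun i _ => ha i) fun i _ j _ hij => congrArg Prod.fst (hf hij)

def partZeroColoring : Sym2 (Fin 4 × Fin 2) → Fin 2 :=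
  Sym2.lift ⟨fun u v => if u.1 = 0 ∨ v.1 = 0 then 0 else 1, fun u v => by simp only [or_comm]⟩

lemma not_contains_stripe_four_partZeroColoring :
    ¬ Contains (colorClass (multiK 4 2) partZeroColoring 0) (stripe 4) := fun h => by
  have := h.stripe_le_card_of_cover (Finset.univ.filter fun v => v.1 = 0) fun u v ⟨_, huv⟩ => ?_
  · revert this; decide
  · simp only [partZeroColoring, Sym2.lift_mk] at huv
    split_ifs at huv with h0
    · simpa using h0
    · exact absurd huv (by decide)

lemma not_contains_cycleGraph_seven_partZeroColoring :
    ¬ Contains (colorClass (multiK 4 2) partZeroColoring 1) (cycleGraph 7) := fun h => by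
  have := h.card_le_card_of_adj_mem (Finset.univ.filter fun v => v.1 ≠ 0) (fun u v ⟨_, huv⟩ => ?_)
    fun i => ⟨i + 1, by simp [cycleGraph_adj']⟩
  · revert this; decide
  · simp only [partZeroColoring, Sym2.lift_mk] at huv
    split_ifs at huv with h0
    · exact absurd huv (by decide)
    · simpa using fun h => h0 (Or.inl h)

lemma not_arrowsC7_four_one_four : ¬ ArrowsC7 4 1 4 := fun h => by
  rcases h fun _ => 0 with h | h <;> simpa using h.card_le

theorem stmt14 :
    ArrowsC7 4 3 4 ∧
    (∃ c : Sym2 (Fin 4 × Fin 2) → Fin 2,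
      ¬ Contains (colorClass (multiK 4 2) c 0) (stripe 4) ∧
      ¬ Contains (colorClass (multiK 4 2) c 1) (cycleGraph 7)) ∧
    IsLeast {t : ℕ | 0 < t ∧ ArrowsC7 4 t 4} 3 := by
  refine ⟨arrowsC7_four_three_four, ⟨partZeroColoring,
    not_contains_stripe_four_partZeroColoring, not_contains_cycleGraph_seven_partZeroColoring⟩,
    ⟨by norm_num, arrowsC7_four_three_four⟩, fun t ⟨ht0, ht⟩ => ?_⟩
  by_contra! hlt
  interval_cases t
  · exact not_arrowsC7_four_one_four ht
  · rcases ht partZeroColoring with h | h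
    · exact not_contains_stripe_four_partZeroColoring h
    · exact not_contains_cycleGraph_seven_partZeroColoring h
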